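/- arXiv:2208.09388 — 5 statements merged into one kernel-verified Lean document; each statement's English description precedes it below -/
import Mathlib

section
/- Let V be a Hilbert space with symmetric, continuous, coercive bilinear form B inducing the energy norm ‖·‖_B. Let g : V → ℝ be Gâteaux differentiable with continuous derivative g' : V → V* satisfying |⟨g'(v) − g'(w), z⟩| ≤ C_goal ‖v−w‖_B ‖z‖_B for all v, w, z ∈ V. Let u ∈ V solve B(u, v) = F(v) for all v ∈ V with F ∈ V*, and let u_b ∈ V_b be its Galerkin approximation in a closed subspace V_b ⊆ V. Let z[u_b] ∈ V solve B(v, z[u_b]) = ⟨g'(u_b), v⟩ for all v ∈ V, with Galerkin approximation z_b[u_b] ∈ V_b. Then |g(u) − g(u_b)| ≤ ‖u − u_b‖_B · ‖z[u_b] − z_b[u_b]‖_B + (C_goal/2) · ‖u − u_b‖_B². -/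
/-- Goal-oriented error estimate for a continuously Gâteaux differentiable nonlinear goal
functional. -/
theorem stmt_5 {V : Type*} [NormedAddCommGroup V] [NormedSpace ℝ V] [CompleteSpace V]
    (B : V →ₗ[ℝ] V →ₗ[ℝ] ℝ)
    (hsym : ∀ u v : V, B u v = B v u)
    (Ccont : ℝ) (hcont : ∀ u v : V, |B u v| ≤ Ccont * ‖u‖ * ‖v‖)
    (α : ℝ) (hα : 0 < α) (hcoer : ∀ v : V, α * ‖v‖ ^ 2 ≤ B v v)
    (g : V → ℝ) (g' : V → V →L[ℝ] ℝ)
    (hg : ∀ (a d : V) (t : ℝ),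
      HasDerivAt (fun s : ℝ => g (a + s • d)) ((g' (a + t • d)) d) t)
    (hg'cont : Continuous g')
    (Cgoal : ℝ) (hCgoal : 0 ≤ Cgoal)
    (hlip : ∀ v w z : V, |g' v z - g' w z| ≤
      Cgoal * Real.sqrt (B (v - w) (v - w)) * Real.sqrt (B z z))
    (F : V →L[ℝ] ℝ) (Vb : Submodule ℝ V) (hVb : IsClosed (Vb : Set V))
    (u ub zub zbub : V)
    (hu : ∀ v : V, B u v = F v)
    (hub : ub ∈ Vb) (hubGal : ∀ v ∈ Vb, B ub v = F v)
    (hzub : ∀ v : V, B v zub = g' ub v)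
    (hzbub : zbub ∈ Vb) (hzbubGal : ∀ v ∈ Vb, B v zbub = g' ub v) :
    |g u - g ub| ≤
      Real.sqrt (B (u - ub) (u - ub)) * Real.sqrt (B (zub - zbub) (zub - zbub)) +
        Cgoal / 2 * Real.sqrt (B (u - ub) (u - ub)) ^ 2 := by
  set e := u - ub with he
  have hBpos : ∀ v : V, 0 ≤ B v v := fun v =>
    le_trans (by positivity) (hcoer v)
  -- Cauchy-Schwarz for B
  have cs : ∀ x y : V, |B x y| ≤ Real.sqrt (B x x) * Real.sqrt (B y y) := by
    intro x y
    have h2 : (B x y) ^ 2 ≤ B x x * B y y := by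
      by_cases hy : y = 0
      · simp [hy]
      · have hyy : 0 < B y y := by
          have hn : 0 < ‖y‖ ^ 2 := by
            have := norm_pos_iff.mpr hy
            positivity
          exact lt_of_lt_of_le (mul_pos hα hn) (hcoer y)
        have h0 := hBpos ((B y y) • x - (B x y) • y)
        simp only [map_sub, map_smul, LinearMap.sub_apply, LinearMap.smul_apply,
          smul_eq_mul] at h0
        rw [show (B y) x = (B x) y from hsym y x] at h0
        nlinarith [h0, hyy]
    calc |B x y| = Real.sqrt ((B x y) ^ 2) := by rw [Real.sqrt_sq_eq_abs]
      _ ≤ Real.sqrt (B x x * B y y) := Real.sqrt_le_sqrt h2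
      _ = Real.sqrt (B x x) * Real.sqrt (B y y) := Real.sqrt_mul (hBpos x) _
  -- Galerkin orthogonality: B e zbub = 0
  have horth : B e zbub = 0 := by
    have h1 : B u zbub = F zbub := hu zbub
    have h2 : B ub zbub = F zbub := hubGal zbub hzbub
    simp [he, map_sub, LinearMap.sub_apply, h1, h2]
  have hBe : B e (zub - zbub) = g' ub e := by
    rw [map_sub, horth, hzub e, sub_zero]
  -- continuity of the integrand
  have hcontφ : Continuous fun t : ℝ => g' (ub + t • e) e := by
    have h1 : Continuous fun t : ℝ => g' (ub + t • e) :=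
      hg'cont.comp (continuous_const.add (continuous_id.smul continuous_const))
    exact (ContinuousLinearMap.apply ℝ ℝ e).continuous.comp h1
  have hint : IntervalIntegrable (fun t : ℝ => g' (ub + t • e) e)
      MeasureTheory.volume 0 1 := hcontφ.intervalIntegrable 0 1
  -- FTC
  have hftc : ∫ t in (0:ℝ)..1, g' (ub + t • e) e = g u - g ub := by
    have := intervalIntegral.integral_eq_sub_of_hasDerivAt
      (f := fun s : ℝ => g (ub + s • e))
      (fun t _ => hg ub e t) hint
    simpa [he] using this
  -- split integrand
  have hsplit : g u - g ub =
      B e (zub - zbub) + ∫ t in (0:ℝ)..1, (g' (ub + t • e) e - g' ub e) := by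
    rw [intervalIntegral.integral_sub hint (intervalIntegrable_const),
      intervalIntegral.integral_const, hftc, hBe]
    simp
  -- bound the remainder integrand
  have hψ : ∀ t ∈ Set.Icc (0:ℝ) 1, |g' (ub + t • e) e - g' ub e| ≤
      Cgoal * Real.sqrt (B e e) ^ 2 * t := by
    intro t ht
    have h := hlip (ub + t • e) ub e
    have hsub : ub + t • e - ub = t • e := by abel
    rw [hsub] at h
    have hB : B (t • e) (t • e) = t ^ 2 * B e e := by
      simp only [map_smul, LinearMap.smul_apply, smul_eq_mul]; ring
    have hs : Real.sqrt (B (t • e) (t • e)) = t * Real.sqrt (B e e) := by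
      rw [hB, Real.sqrt_mul (by positivity), Real.sqrt_sq ht.1]
    rw [hs] at h
    calc |g' (ub + t • e) e - g' ub e| ≤ Cgoal * (t * Real.sqrt (B e e)) * Real.sqrt (B e e) := h
      _ = Cgoal * Real.sqrt (B e e) ^ 2 * t := by ring
  -- integral bound
  have hintψ : IntervalIntegrable (fun t : ℝ => g' (ub + t • e) e - g' ub e)
      MeasureTheory.volume 0 1 := hint.sub intervalIntegrable_const
  have hrem : |∫ t in (0:ℝ)..1, (g' (ub + t • e) e - g' ub e)| ≤
      Cgoal / 2 * Real.sqrt (B e e) ^ 2 := by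
    have h1 : |∫ t in (0:ℝ)..1, (g' (ub + t • e) e - g' ub e)| ≤
        ∫ t in (0:ℝ)..1, Cgoal * Real.sqrt (B e e) ^ 2 * t := by
      apply intervalIntegral.abs_integral_le_integral_abs (by norm_num) |>.trans
      exact intervalIntegral.integral_mono_on (by norm_num) hintψ.abs
        (((continuous_const.mul continuous_id).intervalIntegrable 0 1)) hψ
    calc |∫ t in (0:ℝ)..1, (g' (ub + t • e) e - g' ub e)| ≤
        ∫ t in (0:ℝ)..1, Cgoal * Real.sqrt (B e e) ^ 2 * t := h1
      _ = Cgoal * Real.sqrt (B e e) ^ 2 * ∫ t in (0:ℝ)..1, t := by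
          rw [intervalIntegral.integral_const_mul]
      _ = Cgoal / 2 * Real.sqrt (B e e) ^ 2 := by
          rw [integral_id]; ring
  -- finish
  calc |g u - g ub|
      ≤ |B e (zub - zbub)| + |∫ t in (0:ℝ)..1, (g' (ub + t • e) e - g' ub e)| := by
        rw [hsplit]; exact abs_add_le _ _
    _ ≤ Real.sqrt (B e e) * Real.sqrt (B (zub - zbub) (zub - zbub)) +
        Cgoal / 2 * Real.sqrt (B e e) ^ 2 := add_le_add (cs e _) hrem
end

section
/- Let V be a Hilbert space, a : V × V → ℝ an elliptic (coercive) and continuous bilinear form, and F ∈ V*. Let (V_ℓ)_{ℓ∈ℕ} be a nested sequence of closed subspaces of V (V_ℓ ⊆ V_{ℓ+1}), and let V_∞ be the closure of their union. For each ℓ ∈ ℕ ∪ {∞}, there exists a unique u_ℓ ∈ V_ℓ with a(u_ℓ, v) = F(v) for all v ∈ V_ℓ, and ‖u_∞ − u_ℓ‖_V → 0 as ℓ → ∞. -/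
/-!
Coercivity makes the symmetric part of `a` an inner product whose norm is equivalent to the
norm of `V`, so every closed subspace of `V` is a Hilbert space in disguise and Mathlib's
Lax–Milgram theorem provides the Galerkin solutions. Galerkin orthogonality gives Céa's lemma
`‖u - u_S‖ ≤ ‖a‖ / α * dist(u, S)`, which yields uniqueness (take `u ∈ S`) and convergence:
the `V_ℓ` increase and their union is dense in `V_∞`, so `dist(u_∞, V_ℓ) → 0`.
-/

open Filter Topology Metric InnerProductSpace

noncomputable section

variable {V : Type*} [NormedAddCommGroup V] [NormedSpace ℝ V] {a : V →L[ℝ] V →L[ℝ] ℝ}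

namespace IsCoercive

theorem apply_self_nonneg (ha : IsCoercive a) (v : V) : 0 ≤ a v v := by
  obtain ⟨C, hC, h⟩ := ha
  exact le_trans (by positivity) (h v)

theorem eq_zero_of_apply_self_eq_zero (ha : IsCoercive a) {v : V} (hv : a v v = 0) : v = 0 := by
  obtain ⟨C, hC, h⟩ := ha
  have : C * (‖v‖ * ‖v‖) ≤ 0 := by simpa only [hv, mul_assoc] using h v
  exact norm_eq_zero.1 <| mul_self_eq_zero.1 <|
    le_antisymm (nonpos_of_mul_nonpos_right this hC) (by positivity)

end IsCoercive

/-- `V` renormed by the inner product `(a x y + a y x) / 2`, which is definite because `a` is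
coercive; the instances therefore assume `Fact (IsCoercive a)`. -/
def EnergySpace (_a : V →L[ℝ] V →L[ℝ] ℝ) : Type _ := V

namespace EnergySpace

variable (a)

instance : AddCommGroup (EnergySpace a) := inferInstanceAs (AddCommGroup V)

instance : Module ℝ (EnergySpace a) := inferInstanceAs (Module ℝ V)

def equiv : V ≃ₗ[ℝ] EnergySpace a := LinearEquiv.refl ℝ V

variable [ha : Fact (IsCoercive a)]

instance core : InnerProductSpace.Core ℝ (EnergySpace a) where
  inner x y :=
    (a ((equiv a).symm x) ((equiv a).symm y) + a ((equiv a).symm y) ((equiv a).symm x)) / 2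
  conj_inner_symm x y := by simp only [conj_trivial, add_comm]
  re_inner_nonneg x := by
    simpa only [RCLike.re_to_real, add_self_div_two] using ha.out.apply_self_nonneg _
  add_left x y z := by simp only [map_add, add_apply]; ring
  smul_left x y r := by
    simp only [map_smul, smul_apply, smul_eq_mul, Real.ringHom_apply]; ring
  definite x hx := by
    rw [add_self_div_two] at hx
    simpa using ha.out.eq_zero_of_apply_self_eq_zero hx

instance : NormedAddCommGroup (EnergySpace a) := (core a).toNormedAddCommGroup

instance : InnerProductSpace ℝ (EnergySpace a) := .ofCore (core a).toCore

theorem norm_sq_eq (x : EnergySpace a) :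
    ‖x‖ ^ 2 = a ((equiv a).symm x) ((equiv a).symm x) := by
  rw [← real_inner_self_eq_norm_sq]
  exact add_self_div_two _

def continuousEquiv : V ≃L[ℝ] EnergySpace a where
  toLinearEquiv := equiv a
  continuous_toFun := by
    refine AddMonoidHomClass.continuous_of_bound (equiv a) (√‖a‖) fun x => ?_
    refine (pow_le_pow_iff_left₀ (norm_nonneg _) (by positivity) two_ne_zero).1 ?_
    rw [norm_sq_eq, LinearEquiv.symm_apply_apply, mul_pow, Real.sq_sqrt (norm_nonneg a), sq]
    exact (le_abs_self _).trans ((a.le_opNorm₂ x x).trans_eq (mul_assoc _ _ _))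
  continuous_invFun := by
    obtain ⟨C, hC, h⟩ := ha.out
    refine AddMonoidHomClass.continuous_of_bound (equiv a).symm (√C)⁻¹ fun x => ?_
    rw [inv_mul_eq_div, le_div_iff₀' (by positivity)]
    refine (pow_le_pow_iff_left₀ (by positivity) (norm_nonneg _) two_ne_zero).1 ?_
    rw [mul_pow, Real.sq_sqrt hC.le, norm_sq_eq, sq, ← mul_assoc]
    exact h _

instance [CompleteSpace V] : CompleteSpace (EnergySpace a) :=
  ((continuousEquiv a).isUniformEmbedding.completeSpace_congr (continuousEquiv a).surjective).1
    ‹_›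

end EnergySpace

theorem IsCoercive.exists_forall_apply_eq [CompleteSpace V] (ha : IsCoercive a)
    (F : V →L[ℝ] ℝ) : ∃ u, ∀ v, a u v = F v := by
  have : Fact (IsCoercive a) := ⟨ha⟩
  set e := EnergySpace.continuousEquiv a
  set b := a.bilinearComp e.symm.toContinuousLinearMap e.symm.toContinuousLinearMap
  have hb : IsCoercive b := ⟨1, one_pos, fun x => by
    rw [one_mul, ← sq, EnergySpace.norm_sq_eq]; rfl⟩
  set y := (toDual ℝ (EnergySpace a)).symm (F.comp e.symm.toContinuousLinearMap)
  refine ⟨e.symm (hb.continuousLinearEquivOfBilin.symm y), fun v => ?_⟩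
  have := hb.continuousLinearEquivOfBilin_apply (hb.continuousLinearEquivOfBilin.symm y) (e v)
  simpa [b, y] using this.symm

def IsGalerkinSolution (a : V →L[ℝ] V →L[ℝ] ℝ) (F : V →L[ℝ] ℝ) (S : Submodule ℝ V) (u : V) :
    Prop :=
  u ∈ S ∧ ∀ v ∈ S, a u v = F v

theorem exists_isGalerkinSolution [CompleteSpace V] (ha : IsCoercive a) (F : V →L[ℝ] ℝ)
    {S : Submodule ℝ V} (hS : IsClosed (S : Set V)) : ∃ u, IsGalerkinSolution a F S u := by
  have : CompleteSpace S := hS.completeSpace_coe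
  obtain ⟨C, hC, h⟩ := ha
  have haS : IsCoercive (a.bilinearComp S.subtypeL S.subtypeL) := ⟨C, hC, fun u => h u⟩
  obtain ⟨u, hu⟩ := haS.exists_forall_apply_eq (F.comp S.subtypeL)
  exact ⟨u, u.2, fun v hv => hu ⟨v, hv⟩⟩

theorem IsGalerkinSolution.apply_sub_eq_zero {F : V →L[ℝ] ℝ} {S T : Submodule ℝ V} {u w : V}
    (hu : IsGalerkinSolution a F T u) (hw : IsGalerkinSolution a F S w) (hST : S ≤ T) {v : V}
    (hv : v ∈ S) : a (u - w) v = 0 := by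
  rw [map_sub, sub_apply, hu.2 v (hST hv), hw.2 v hv, sub_self]

section Cea

variable {α : ℝ} (hcoer : ∀ v, α * ‖v‖ ^ 2 ≤ a v v) {S : Submodule ℝ V} {u uS : V}
  (huS : uS ∈ S) (horth : ∀ v ∈ S, a (u - uS) v = 0)
include hcoer huS horth

theorem mul_norm_sub_le_of_forall_apply_sub_eq_zero {v : V} (hv : v ∈ S) :
    α * ‖u - uS‖ ≤ ‖a‖ * ‖u - v‖ := by
  set d := u - uS
  have hdd : a d d = a d (u - v) := by
    rw [← add_zero (a d (u - v)), ← horth _ (sub_mem hv huS), ← map_add, sub_add_sub_cancel]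
  rcases (norm_nonneg d).eq_or_lt with hd | hd
  · rw [← hd, mul_zero]; positivity
  refine le_of_mul_le_mul_right ?_ hd
  calc α * ‖d‖ * ‖d‖ = α * ‖d‖ ^ 2 := by ring
    _ ≤ a d (u - v) := hdd ▸ hcoer d
    _ ≤ ‖a‖ * ‖d‖ * ‖u - v‖ := (le_abs_self _).trans (a.le_opNorm₂ _ _)
    _ = ‖a‖ * ‖u - v‖ * ‖d‖ := by ring

theorem norm_sub_le_mul_infDist_of_forall_apply_sub_eq_zero (hα : 0 < α) :
    ‖u - uS‖ ≤ ‖a‖ / α * infDist u S := by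
  have : Nonempty (S : Set V) := ⟨⟨0, S.zero_mem⟩⟩
  rw [infDist_eq_iInf, Real.mul_iInf_of_nonneg (by positivity)]
  refine le_ciInf fun v => ?_
  rw [div_mul_eq_mul_div, le_div_iff₀' hα, dist_eq_norm]
  exact mul_norm_sub_le_of_forall_apply_sub_eq_zero hcoer huS horth v.2

end Cea

theorem IsGalerkinSolution.unique {α : ℝ} (hα : 0 < α) (hcoer : ∀ v, α * ‖v‖ ^ 2 ≤ a v v)
    {F : V →L[ℝ] ℝ} {S : Submodule ℝ V} {u w : V} (hu : IsGalerkinSolution a F S u)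
    (hw : IsGalerkinSolution a F S w) : u = w := by
  have := mul_norm_sub_le_of_forall_apply_sub_eq_zero hcoer hw.1
    (fun v hv => hu.apply_sub_eq_zero hw le_rfl hv) hu.1
  rw [sub_self, norm_zero, mul_zero] at this
  exact sub_eq_zero.1 (norm_le_zero_iff.1 (nonpos_of_mul_nonpos_right this hα))

theorem tendsto_infDist_of_mem_closure_iUnion {X ι : Type*} [PseudoMetricSpace X] [Preorder ι]
    {s : ι → Set X} (hs : Monotone s) {x : X} (hx : x ∈ closure (⋃ i, s i)) :
    Tendsto (fun i => infDist x (s i)) atTop (𝓝 0) := by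
  refine tendsto_order.2
    ⟨fun ε hε => .of_forall fun i => hε.trans_le infDist_nonneg, fun ε hε => ?_⟩
  obtain ⟨y, hy, hxy⟩ := Metric.mem_closure_iff.1 hx ε hε
  obtain ⟨i, hi⟩ := Set.mem_iUnion.1 hy
  filter_upwards [eventually_ge_atTop i] with j hij
  exact (infDist_le_dist_of_mem (hs hij hi)).trans_lt hxy

theorem tendsto_norm_sub_isGalerkinSolution {ι : Type*} [Preorder ι] [IsDirectedOrder ι]
    [Nonempty ι] {α : ℝ} (hα : 0 < α) (hcoer : ∀ v, α * ‖v‖ ^ 2 ≤ a v v) {F : V →L[ℝ] ℝ}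
    {Vs : ι → Submodule ℝ V} (hVs : Monotone Vs) {u : ι → V} {uinf : V}
    (hu : ∀ i, IsGalerkinSolution a F (Vs i) (u i))
    (huinf : IsGalerkinSolution a F (⨆ i, Vs i).topologicalClosure uinf) :
    Tendsto (fun i => ‖uinf - u i‖) atTop (𝓝 0) := by
  have hclosure : uinf ∈ closure (⋃ i, (Vs i : Set V)) := by
    rw [← Submodule.coe_iSup_of_directed Vs hVs.directed_le, ← Submodule.topologicalClosure_coe]
    exact huinf.1
  have hle i : Vs i ≤ (⨆ i, Vs i).topologicalClosure :=
    (le_iSup Vs i).trans (Submodule.le_topologicalClosure _)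
  have hcea i : ‖uinf - u i‖ ≤ ‖a‖ / α * infDist uinf (Vs i) :=
    norm_sub_le_mul_infDist_of_forall_apply_sub_eq_zero hcoer (hu i).1
      (fun _ => huinf.apply_sub_eq_zero (hu i) (hle i)) hα
  have hdist := tendsto_infDist_of_mem_closure_iUnion (fun i j hij => hVs hij) hclosure
  exact squeeze_zero (fun _ => norm_nonneg _) hcea (by simpa using hdist.const_mul (‖a‖ / α))

end

/-- A priori convergence of Galerkin solutions on a nested sequence of closed subspaces
(Babuška–Vogelius). -/
theorem stmt_12 {V : Type*} [NormedAddCommGroup V] [NormedSpace ℝ V] [CompleteSpace V]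
    (a : V →ₗ[ℝ] V →ₗ[ℝ] ℝ)
    (Ccont : ℝ) (hcont : ∀ u v : V, |a u v| ≤ Ccont * ‖u‖ * ‖v‖)
    (α : ℝ) (hα : 0 < α) (hcoer : ∀ v : V, α * ‖v‖ ^ 2 ≤ a v v)
    (F : V →L[ℝ] ℝ)
    (Vl : ℕ → Submodule ℝ V)
    (hVlclosed : ∀ ℓ, IsClosed ((Vl ℓ : Set V)))
    (hnested : ∀ ℓ, Vl ℓ ≤ Vl (ℓ + 1)) :
    ∃ (u : ℕ → V) (uinf : V),
      (∀ ℓ, u ℓ ∈ Vl ℓ ∧ ∀ v ∈ Vl ℓ, a (u ℓ) v = F v) ∧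
      (∀ ℓ, ∀ u' ∈ Vl ℓ, (∀ v ∈ Vl ℓ, a u' v = F v) → u' = u ℓ) ∧
      (uinf ∈ (⨆ ℓ, Vl ℓ).topologicalClosure ∧
        ∀ v ∈ (⨆ ℓ, Vl ℓ).topologicalClosure, a uinf v = F v) ∧
      (∀ u' ∈ (⨆ ℓ, Vl ℓ).topologicalClosure,
        (∀ v ∈ (⨆ ℓ, Vl ℓ).topologicalClosure, a u' v = F v) → u' = uinf) ∧
      Tendsto (fun ℓ => ‖uinf - u ℓ‖) atTop (nhds 0) := by
  set A := a.mkContinuous₂ Ccont fun u v => (Real.norm_eq_abs _).trans_le (hcont u v)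
  have hcoerA : ∀ v, α * ‖v‖ ^ 2 ≤ A v v := hcoer
  have hA : IsCoercive A := ⟨α, hα, fun v => by simpa only [mul_assoc, ← sq] using hcoerA v⟩
  choose u hu using fun ℓ => exists_isGalerkinSolution hA F (hVlclosed ℓ)
  obtain ⟨uinf, huinf⟩ :=
    exists_isGalerkinSolution hA F (⨆ ℓ, Vl ℓ).isClosed_topologicalClosure
  exact ⟨u, uinf, hu, fun ℓ u' hu' h' => IsGalerkinSolution.unique hα hcoerA ⟨hu', h'⟩ (hu ℓ),
    huinf, fun u' hu' h' => IsGalerkinSolution.unique hα hcoerA ⟨hu', h'⟩ huinf,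
    tendsto_norm_sub_isGalerkinSolution hα hcoerA (monotone_nat_of_le_succ hnested) hu huinf⟩
end

section
/- Let V be a Hilbert space with symmetric, continuous, coercive bilinear form B and energy norm ‖·‖_B, and let g' : V → V* satisfy |⟨g'(v) − g'(w), z⟩| ≤ C_goal ‖v−w‖_B ‖z‖_B. For each ℓ ∈ ℕ ∪ {∞}, let V_ℓ ⊆ V be closed nested subspaces with V_∞ the closure of the union, let u_ℓ ∈ V_ℓ be Galerkin solutions converging to u_∞ ∈ V_∞, and for w ∈ V let z_ℓ[w] ∈ V_ℓ solve B(v, z_ℓ[w]) = ⟨g'(w), v⟩ for all v ∈ V_ℓ. If ‖u_∞ − u_ℓ‖_B → 0 and ‖z_∞[u_∞] − z_ℓ[u_∞]‖_B → 0 as ℓ → ∞, then ‖z_∞[u_ℓ] − z_ℓ[u_ℓ]‖_B → 0 as ℓ → ∞. -/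
open Filter

private lemma aux_cs {V : Type*} [AddCommGroup V] [Module ℝ V]
    (B : V →ₗ[ℝ] V →ₗ[ℝ] ℝ) (hsym : ∀ u v : V, B u v = B v u)
    (hnn : ∀ v : V, 0 ≤ B v v) (a b : V) :
    B a b ≤ Real.sqrt (B a a) * Real.sqrt (B b b) := by
  have key : (B a b) ^ 2 ≤ B a a * B b b := by
    have h : ∀ t : ℝ, 0 ≤ (B b b) * (t * t) + (2 * B a b) * t + B a a := by
      intro t
      have expand : B (a + t • b) (a + t • b)
          = (B b b) * (t * t) + (2 * B a b) * t + B a a := by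
        simp only [map_add, map_smul, LinearMap.add_apply, LinearMap.smul_apply,
          smul_eq_mul, hsym b a]
        ring
      have := hnn (a + t • b)
      linarith [expand ▸ this]
    have hd : discrim (B b b) (2 * B a b) (B a a) ≤ 0 := discrim_le_zero h
    unfold discrim at hd
    nlinarith
  calc B a b ≤ |B a b| := le_abs_self _
    _ = Real.sqrt ((B a b) ^ 2) := (Real.sqrt_sq_eq_abs _).symm
    _ ≤ Real.sqrt (B a a * B b b) := Real.sqrt_le_sqrt key
    _ = Real.sqrt (B a a) * Real.sqrt (B b b) := Real.sqrt_mul (hnn a) _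

private lemma aux_tri {V : Type*} [AddCommGroup V] [Module ℝ V]
    (B : V →ₗ[ℝ] V →ₗ[ℝ] ℝ) (hsym : ∀ u v : V, B u v = B v u)
    (hnn : ∀ v : V, 0 ≤ B v v) (a b : V) :
    Real.sqrt (B (a + b) (a + b)) ≤ Real.sqrt (B a a) + Real.sqrt (B b b) := by
  have hcs := aux_cs B hsym hnn a b
  have hsa : Real.sqrt (B a a) ^ 2 = B a a := Real.sq_sqrt (hnn a)
  have hsb : Real.sqrt (B b b) ^ 2 = B b b := Real.sq_sqrt (hnn b)
  have expand : B (a + b) (a + b) = B a a + 2 * B a b + B b b := by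
    simp only [map_add, LinearMap.add_apply, hsym b a]; ring
  have h1 : B (a + b) (a + b) ≤ (Real.sqrt (B a a) + Real.sqrt (B b b)) ^ 2 := by
    rw [expand]; nlinarith
  calc Real.sqrt (B (a + b) (a + b))
      ≤ Real.sqrt ((Real.sqrt (B a a) + Real.sqrt (B b b)) ^ 2) := Real.sqrt_le_sqrt h1
    _ = Real.sqrt (B a a) + Real.sqrt (B b b) :=
        Real.sqrt_sq (by positivity)

private lemma aux_stab {V : Type*} [NormedAddCommGroup V] [NormedSpace ℝ V]
    (B : V →ₗ[ℝ] V →ₗ[ℝ] ℝ) (hsym : ∀ u v : V, B u v = B v u)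
    (hnn : ∀ v : V, 0 ≤ B v v)
    (g' : V → V →L[ℝ] ℝ) (Cgoal : ℝ) (hCgoal : 0 ≤ Cgoal)
    (hlip : ∀ v w z : V, |g' v z - g' w z| ≤
      Cgoal * Real.sqrt (B (v - w) (v - w)) * Real.sqrt (B z z))
    (W : Submodule ℝ V) (v w z1 z2 : V) (hz1 : z1 ∈ W) (hz2 : z2 ∈ W)
    (h1 : ∀ x ∈ W, B x z1 = g' v x) (h2 : ∀ x ∈ W, B x z2 = g' w x) :
    Real.sqrt (B (z1 - z2) (z1 - z2)) ≤ Cgoal * Real.sqrt (B (v - w) (v - w)) := by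
  set d := z1 - z2 with hd
  have hdW : d ∈ W := W.sub_mem hz1 hz2
  have hBd : B d d = g' v d - g' w d := by
    have : B d d = B d z1 - B d z2 := by
      simp [hd, map_sub, LinearMap.sub_apply, hsym]
    rw [this, h1 d hdW, h2 d hdW]
  have hb := le_trans (le_abs_self ((g' v) d - (g' w) d)) (hlip v w d)
  rw [← hBd] at hb
  have hsq : Real.sqrt (B d d) ^ 2 = B d d := Real.sq_sqrt (hnn d)
  rcases eq_or_lt_of_le (Real.sqrt_nonneg (B d d)) with h0 | h0
  · rw [← h0]; positivity
  · have : Real.sqrt (B d d) * Real.sqrt (B d d)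
        ≤ (Cgoal * Real.sqrt (B (v - w) (v - w))) * Real.sqrt (B d d) := by
      nlinarith
    exact le_of_mul_le_mul_right this h0


/-- Convergence of the discrete dual errors `‖z_∞[u_ℓ] − z_ℓ[u_ℓ]‖_B → 0` along the sequence of
Galerkin primal solutions. -/
theorem stmt_13 {V : Type*} [NormedAddCommGroup V] [NormedSpace ℝ V] [CompleteSpace V]
    (B : V →ₗ[ℝ] V →ₗ[ℝ] ℝ)
    (hsym : ∀ u v : V, B u v = B v u)
    (Ccont : ℝ) (hcont : ∀ u v : V, |B u v| ≤ Ccont * ‖u‖ * ‖v‖)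
    (α : ℝ) (hα : 0 < α) (hcoer : ∀ v : V, α * ‖v‖ ^ 2 ≤ B v v)
    (g' : V → V →L[ℝ] ℝ) (Cgoal : ℝ) (hCgoal : 0 ≤ Cgoal)
    (hlip : ∀ v w z : V, |g' v z - g' w z| ≤
      Cgoal * Real.sqrt (B (v - w) (v - w)) * Real.sqrt (B z z))
    (Vl : ℕ → Submodule ℝ V)
    (hVlclosed : ∀ ℓ, IsClosed ((Vl ℓ : Set V)))
    (hnested : ∀ ℓ, Vl ℓ ≤ Vl (ℓ + 1))
    (F : V →L[ℝ] ℝ)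
    (u : ℕ → V) (uinf : V)
    (hu : ∀ ℓ, u ℓ ∈ Vl ℓ ∧ ∀ v ∈ Vl ℓ, B (u ℓ) v = F v)
    (huinf : uinf ∈ (⨆ ℓ, Vl ℓ).topologicalClosure ∧
      ∀ v ∈ (⨆ ℓ, Vl ℓ).topologicalClosure, B uinf v = F v)
    (zl : ℕ → V → V) (zinf : V → V)
    (hzl : ∀ ℓ (w : V), zl ℓ w ∈ Vl ℓ ∧ ∀ v ∈ Vl ℓ, B v (zl ℓ w) = g' w v)
    (hzinf : ∀ w : V, zinf w ∈ (⨆ ℓ, Vl ℓ).topologicalClosure ∧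
      ∀ v ∈ (⨆ ℓ, Vl ℓ).topologicalClosure, B v (zinf w) = g' w v)
    (huconv : Tendsto (fun ℓ => Real.sqrt (B (uinf - u ℓ) (uinf - u ℓ))) atTop (nhds 0))
    (hzconv : Tendsto
      (fun ℓ => Real.sqrt (B (zinf uinf - zl ℓ uinf) (zinf uinf - zl ℓ uinf)))
      atTop (nhds 0)) :
    Tendsto (fun ℓ => Real.sqrt (B (zinf (u ℓ) - zl ℓ (u ℓ)) (zinf (u ℓ) - zl ℓ (u ℓ))))
      atTop (nhds 0) := by
  have hnn : ∀ v : V, 0 ≤ B v v := fun v => le_trans (by positivity) (hcoer v)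
  set Winf := (⨆ ℓ, Vl ℓ).topologicalClosure with hW
  have hneg : ∀ a b : V, Real.sqrt (B (a - b) (a - b)) = Real.sqrt (B (b - a) (b - a)) := by
    intro a b
    have h2 : B (a - b) (a - b) = B (b - a) (b - a) := by
      simp only [map_sub, LinearMap.sub_apply, hsym a b]
      ring
    rw [h2]
  have hbound : ∀ ℓ, Real.sqrt (B (zinf (u ℓ) - zl ℓ (u ℓ)) (zinf (u ℓ) - zl ℓ (u ℓ)))
      ≤ Cgoal * Real.sqrt (B (uinf - u ℓ) (uinf - u ℓ))
        + Real.sqrt (B (zinf uinf - zl ℓ uinf) (zinf uinf - zl ℓ uinf))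
        + Cgoal * Real.sqrt (B (uinf - u ℓ) (uinf - u ℓ)) := by
    intro ℓ
    have h1 : Real.sqrt (B (zinf (u ℓ) - zinf uinf) (zinf (u ℓ) - zinf uinf))
        ≤ Cgoal * Real.sqrt (B (u ℓ - uinf) (u ℓ - uinf)) :=
      aux_stab B hsym hnn g' Cgoal hCgoal hlip Winf (u ℓ) uinf _ _
        (hzinf (u ℓ)).1 (hzinf uinf).1 (hzinf (u ℓ)).2 (hzinf uinf).2
    rw [hneg (u ℓ) uinf] at h1
    have h3 : Real.sqrt (B (zl ℓ uinf - zl ℓ (u ℓ)) (zl ℓ uinf - zl ℓ (u ℓ)))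
        ≤ Cgoal * Real.sqrt (B (uinf - u ℓ) (uinf - u ℓ)) :=
      aux_stab B hsym hnn g' Cgoal hCgoal hlip (Vl ℓ) uinf (u ℓ) _ _
        (hzl ℓ uinf).1 (hzl ℓ (u ℓ)).1 (hzl ℓ uinf).2 (hzl ℓ (u ℓ)).2
    have hsplit : zinf (u ℓ) - zl ℓ (u ℓ) =
        ((zinf (u ℓ) - zinf uinf) + (zinf uinf - zl ℓ uinf)) + (zl ℓ uinf - zl ℓ (u ℓ)) := by
      abel
    calc Real.sqrt (B (zinf (u ℓ) - zl ℓ (u ℓ)) (zinf (u ℓ) - zl ℓ (u ℓ)))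
        = Real.sqrt (B (((zinf (u ℓ) - zinf uinf) + (zinf uinf - zl ℓ uinf)) + (zl ℓ uinf - zl ℓ (u ℓ)))
            (((zinf (u ℓ) - zinf uinf) + (zinf uinf - zl ℓ uinf)) + (zl ℓ uinf - zl ℓ (u ℓ)))) := by
          rw [← hsplit]
      _ ≤ Real.sqrt (B ((zinf (u ℓ) - zinf uinf) + (zinf uinf - zl ℓ uinf))
            ((zinf (u ℓ) - zinf uinf) + (zinf uinf - zl ℓ uinf)))
          + Real.sqrt (B (zl ℓ uinf - zl ℓ (u ℓ)) (zl ℓ uinf - zl ℓ (u ℓ))) :=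
          aux_tri B hsym hnn _ _
      _ ≤ (Real.sqrt (B (zinf (u ℓ) - zinf uinf) (zinf (u ℓ) - zinf uinf))
          + Real.sqrt (B (zinf uinf - zl ℓ uinf) (zinf uinf - zl ℓ uinf)))
          + Real.sqrt (B (zl ℓ uinf - zl ℓ (u ℓ)) (zl ℓ uinf - zl ℓ (u ℓ))) := by
          gcongr
          exact aux_tri B hsym hnn _ _
      _ ≤ Cgoal * Real.sqrt (B (uinf - u ℓ) (uinf - u ℓ))
          + Real.sqrt (B (zinf uinf - zl ℓ uinf) (zinf uinf - zl ℓ uinf))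
          + Cgoal * Real.sqrt (B (uinf - u ℓ) (uinf - u ℓ)) := by
          gcongr <;> linarith
  have hlim : Tendsto (fun ℓ => Cgoal * Real.sqrt (B (uinf - u ℓ) (uinf - u ℓ))
      + Real.sqrt (B (zinf uinf - zl ℓ uinf) (zinf uinf - zl ℓ uinf))
      + Cgoal * Real.sqrt (B (uinf - u ℓ) (uinf - u ℓ))) atTop (nhds 0) := by
    have := ((huconv.const_mul Cgoal).add hzconv).add (huconv.const_mul Cgoal)
    simpa using this
  exact squeeze_zero (fun ℓ => Real.sqrt_nonneg _) hbound hlim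
end

section
/- Let V be a Hilbert space with symmetric, continuous, coercive bilinear form B and energy norm ‖·‖_B, and let V_b ⊆ V be a closed subspace. Let F ∈ V* with exact solution u and Galerkin solution u_b ∈ V_b. Let g' : V → V* satisfy |⟨g'(v) − g'(w), z⟩| ≤ C_goal ‖v−w‖_B ‖z‖_B. Let z[w] and z_b[w] denote the exact and Galerkin dual solutions for right-hand side g'(w). Then ‖z[u_b] − z_b[u_b]‖_B ≤ 2 C_goal ‖u − u_b‖_B + ‖z[u] − z_b[u]‖_B. -/
/-- Estimate for the Galerkin error of the dual problem with linearization at the discrete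
primal solution. -/
theorem stmt_14 {V : Type*} [NormedAddCommGroup V] [NormedSpace ℝ V] [CompleteSpace V]
    (B : V →ₗ[ℝ] V →ₗ[ℝ] ℝ)
    (hsym : ∀ u v : V, B u v = B v u)
    (Ccont : ℝ) (hcont : ∀ u v : V, |B u v| ≤ Ccont * ‖u‖ * ‖v‖)
    (α : ℝ) (hα : 0 < α) (hcoer : ∀ v : V, α * ‖v‖ ^ 2 ≤ B v v)
    (Vb : Submodule ℝ V) (hVb : IsClosed (Vb : Set V))
    (F : V →L[ℝ] ℝ)
    (u ub : V) (hu : ∀ v : V, B u v = F v)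
    (hub : ub ∈ Vb) (hubGal : ∀ v ∈ Vb, B ub v = F v)
    (g' : V → V →L[ℝ] ℝ) (Cgoal : ℝ) (hCgoal : 0 ≤ Cgoal)
    (hlip : ∀ v w z : V, |g' v z - g' w z| ≤
      Cgoal * Real.sqrt (B (v - w) (v - w)) * Real.sqrt (B z z))
    (zsol zb : V → V)
    (hz : ∀ w v : V, B v (zsol w) = g' w v)
    (hzb : ∀ w : V, zb w ∈ Vb ∧ ∀ v ∈ Vb, B v (zb w) = g' w v) :
    Real.sqrt (B (zsol ub - zb ub) (zsol ub - zb ub)) ≤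
      2 * Cgoal * Real.sqrt (B (u - ub) (u - ub)) +
        Real.sqrt (B (zsol u - zb u) (zsol u - zb u)) := by
  set E : V → ℝ := fun x => Real.sqrt (B x x) with hE
  have hnn : ∀ x : V, 0 ≤ B x x := by
    intro x
    have := hcoer x
    have h0 : 0 ≤ α * ‖x‖ ^ 2 := by positivity
    linarith
  have hEnn : ∀ x : V, 0 ≤ E x := fun x => Real.sqrt_nonneg _
  have hEsq : ∀ x : V, E x ^ 2 = B x x := fun x => Real.sq_sqrt (hnn x)
  -- Cauchy-Schwarz for B
  have hCS : ∀ x y : V, B x y ≤ E x * E y := by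
    intro x y
    have hquad : ∀ t : ℝ, 0 ≤ B y y * (t * t) + (2 * B x y) * t + B x x := by
      intro t
      have h := hnn (x + t • y)
      have : B (x + t • y) (x + t • y)
          = B y y * (t * t) + (2 * B x y) * t + B x x := by
        simp only [map_add, map_smul, LinearMap.add_apply, LinearMap.smul_apply,
          smul_eq_mul]
        rw [hsym y x]; ring
      linarith [this ▸ h]
    have hd : discrim (B y y) (2 * B x y) (B x x) ≤ 0 := discrim_le_zero hquad
    rw [discrim] at hd
    have hsq : (B x y) ^ 2 ≤ B x x * B y y := by nlinarith
    have := Real.sqrt_le_sqrt hsq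
    calc B x y ≤ |B x y| := le_abs_self _
      _ = Real.sqrt ((B x y) ^ 2) := (Real.sqrt_sq_eq_abs _).symm
      _ ≤ Real.sqrt (B x x * B y y) := this
      _ = E x * E y := Real.sqrt_mul (hnn x) _
  -- triangle inequality for E
  have htri : ∀ x y : V, E (x + y) ≤ E x + E y := by
    intro x y
    have hexp : B (x + y) (x + y) = B x x + 2 * B x y + B y y := by
      simp only [map_add, LinearMap.add_apply]
      rw [hsym y x]; ring
    have h1 : B (x + y) (x + y) ≤ (E x + E y) ^ 2 := by
      have := hCS x y
      nlinarith [hEsq x, hEsq y]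
    calc E (x + y) ≤ Real.sqrt ((E x + E y) ^ 2) := Real.sqrt_le_sqrt h1
      _ = E x + E y := by rw [Real.sqrt_sq (by positivity)]
  -- key cancellation lemma
  have hkey : ∀ v : V, B v v ≤ Cgoal * E (u - ub) * E v → E v ≤ Cgoal * E (u - ub) := by
    intro v hv
    rcases eq_or_lt_of_le (hEnn v) with h0 | h0
    · rw [← h0]; positivity
    · have : E v * E v ≤ Cgoal * E (u - ub) * E v := by
        nlinarith [hEsq v]
      exact le_of_mul_le_mul_right this h0
  -- bound on A := zsol u - zsol ub
  have hA : E (zsol u - zsol ub) ≤ Cgoal * E (u - ub) := by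
    apply hkey
    set v := zsol u - zsol ub
    have : B v v = g' u v - g' ub v := by
      have h1 := hz u v
      have h2 := hz ub v
      simp only [v, map_sub] at *
      linarith
    calc B v v = g' u v - g' ub v := this
      _ ≤ |g' u v - g' ub v| := le_abs_self _
      _ ≤ Cgoal * E (u - ub) * E v := hlip u ub v
  -- bound on D := zb u - zb ub
  have hD : E (zb u - zb ub) ≤ Cgoal * E (u - ub) := by
    apply hkey
    set v := zb u - zb ub with hv
    have hvmem : v ∈ Vb := Submodule.sub_mem _ (hzb u).1 (hzb ub).1
    have : B v v = g' u v - g' ub v := by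
      have h1 := (hzb u).2 v hvmem
      have h2 := (hzb ub).2 v hvmem
      simp only [v, map_sub] at *
      linarith
    calc B v v = g' u v - g' ub v := this
      _ ≤ |g' u v - g' ub v| := le_abs_self _
      _ ≤ Cgoal * E (u - ub) * E v := hlip u ub v
  -- E(-x) = E(x)
  have hEneg : ∀ x : V, E (-x) = E x := by
    intro x; simp only [hE, map_neg, LinearMap.neg_apply, neg_neg]
  have hdecomp : zsol ub - zb ub
      = -(zsol u - zsol ub) + (zsol u - zb u) + (zb u - zb ub) := by abel
  calc E (zsol ub - zb ub)
      = E (-(zsol u - zsol ub) + (zsol u - zb u) + (zb u - zb ub)) := by rw [hdecomp]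
    _ ≤ E (-(zsol u - zsol ub) + (zsol u - zb u)) + E (zb u - zb ub) := htri _ _
    _ ≤ E (-(zsol u - zsol ub)) + E (zsol u - zb u) + E (zb u - zb ub) := by
        linarith [htri (-(zsol u - zsol ub)) (zsol u - zb u)]
    _ = E (zsol u - zsol ub) + E (zsol u - zb u) + E (zb u - zb ub) := by rw [hEneg]
    _ ≤ Cgoal * E (u - ub) + E (zsol u - zb u) + Cgoal * E (u - ub) := by linarith
    _ = 2 * Cgoal * E (u - ub) + E (zsol u - zb u) := by ring
end

section
/- Suppose the saturation assumption ‖u − û_b‖_B ≤ q ‖u − u_b‖_B holds with 0 < q < 1, where u_b and û_b are Galerkin projections of u onto nested closed subspaces V_b ⊆ V̂_b of a Hilbert space with energy inner product B. Then (1 − q²)^{1/2} ‖u − u_b‖_B ≤ ‖û_b − u_b‖_B ≤ ‖u − u_b‖_B. -/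
/-- Under the saturation assumption, the error reduction `‖û_b − u_b‖_B` is equivalent to the
Galerkin error `‖u − u_b‖_B`. -/
theorem stmt_19 {V : Type*} [NormedAddCommGroup V] [NormedSpace ℝ V] [CompleteSpace V]
    (B : V →ₗ[ℝ] V →ₗ[ℝ] ℝ)
    (hsym : ∀ u v : V, B u v = B v u)
    (Ccont : ℝ) (hcont : ∀ u v : V, |B u v| ≤ Ccont * ‖u‖ * ‖v‖)
    (α : ℝ) (hα : 0 < α) (hcoer : ∀ v : V, α * ‖v‖ ^ 2 ≤ B v v)
    (Vb Vhat : Submodule ℝ V)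
    (hVb : IsClosed (Vb : Set V)) (hVhat : IsClosed (Vhat : Set V))
    (hsub : Vb ≤ Vhat)
    (u ub uhat : V)
    (hub : ub ∈ Vb) (hubGal : ∀ v ∈ Vb, B (u - ub) v = 0)
    (huhat : uhat ∈ Vhat) (huhatGal : ∀ v ∈ Vhat, B (u - uhat) v = 0)
    (q : ℝ) (hq0 : 0 < q) (hq1 : q < 1)
    (hsat : Real.sqrt (B (u - uhat) (u - uhat)) ≤ q * Real.sqrt (B (u - ub) (u - ub))) :
    Real.sqrt (1 - q ^ 2) * Real.sqrt (B (u - ub) (u - ub)) ≤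
        Real.sqrt (B (uhat - ub) (uhat - ub)) ∧
      Real.sqrt (B (uhat - ub) (uhat - ub)) ≤ Real.sqrt (B (u - ub) (u - ub)) := by
  set a := B (u - ub) (u - ub) with ha
  set b := B (u - uhat) (u - uhat) with hb
  set c := B (uhat - ub) (uhat - ub) with hc
  have hnn : ∀ v : V, (0:ℝ) ≤ B v v := fun v =>
    le_trans (by positivity) (hcoer v)
  have hcross : B (u - uhat) (uhat - ub) = 0 :=
    huhatGal _ (Vhat.sub_mem huhat (hsub hub))
  have hpyth : a = b + c := by
    have : u - ub = (u - uhat) + (uhat - ub) := by abel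
    rw [ha, this]
    have hcross' : B (uhat - ub) (u - uhat) = 0 := by rw [hsym]; exact hcross
    simp only [map_add, LinearMap.add_apply, hcross, hcross']
    ring
  have ha0 : 0 ≤ a := hnn _
  have hb0 : 0 ≤ b := hnn _
  have hc0 : 0 ≤ c := hnn _
  have hbq : b ≤ q ^ 2 * a := by
    have := mul_self_le_mul_self (Real.sqrt_nonneg b) hsat
    rw [Real.mul_self_sqrt hb0] at this
    calc b ≤ q * Real.sqrt a * (q * Real.sqrt a) := this
      _ = q ^ 2 * (Real.sqrt a * Real.sqrt a) := by ring
      _ = q ^ 2 * a := by rw [Real.mul_self_sqrt ha0]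
  constructor
  · have h1 : (1 - q ^ 2) * a ≤ c := by nlinarith
    calc Real.sqrt (1 - q ^ 2) * Real.sqrt a
        = Real.sqrt ((1 - q ^ 2) * a) := (Real.sqrt_mul (by nlinarith) a).symm
      _ ≤ Real.sqrt c := Real.sqrt_le_sqrt h1
  · exact Real.sqrt_le_sqrt (by nlinarith)
end
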